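/- For all n ≥ 1 and every σ ∈ S_n: σ avoids both patterns 123 and 213 if and only if σ(i) + i ≤ n + 2 for every i ∈ {1, …, n}. Consequently, B_n(123,213) equals the Chan–Robbins–Yuen polytope CRY_n, the convex hull of those permutation matrices M_σ all of whose nonzero entries (i, σ(i)) satisfy σ(i) + i ≤ n + 2. -/

import Mathlib

/-- `σ` contains the pattern `π`. -/
def containsPattern {n k : ℕ} (σ : Equiv.Perm (Fin n)) (π : Equiv.Perm (Fin k)) : Prop :=
  ∃ f : Fin k → Fin n, StrictMono f ∧ ∀ a b : Fin k, σ (f a) < σ (f b) ↔ π a < π b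

/-- The pattern 123. -/
def p123 : Equiv.Perm (Fin 3) := 1
/-- The pattern 213. -/
def p213 : Equiv.Perm (Fin 3) := Equiv.swap 0 1

/-- The permutation matrix of `σ`, viewed as a vector in `ℝ^{n×n}`. -/
def permMatrix {n : ℕ} (σ : Equiv.Perm (Fin n)) : Fin n × Fin n → ℝ :=
  fun p => if σ p.1 = p.2 then 1 else 0

/-! Avoiding both 123 and 213 means that no entry has two smaller entries to its left. In
0-based indexing this is the bound `σ i + i ≤ n`. If `σ i + i > n`, at most `n - 1 - σ i` of the
`i` entries left of position `i` exceed `σ i`, so at least two are smaller. Conversely, under the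
bound every entry `≥ σ c` sits at a position `≤ n - σ c`; these `n - σ c` positions together with
two positions `a < b < c ≤ n - σ c` carrying smaller entries would not fit into `[0, n - σ c]`. -/

open Finset

variable {n : ℕ}

lemma strictMono_vecCons_three {a b c : Fin n} (hab : a < b) (hbc : b < c) :
    StrictMono ![a, b, c] :=
  Fin.strictMono_iff_lt_succ.mpr fun i => by fin_cases i <;> assumption

lemma containsPattern_p123_iff (σ : Equiv.Perm (Fin n)) :
    containsPattern σ p123 ↔
      ∃ a b c : Fin n, a < b ∧ b < c ∧ σ a < σ b ∧ σ b < σ c := by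
  constructor
  · rintro ⟨f, hf, hσ⟩
    exact ⟨f 0, f 1, f 2, hf (by decide), hf (by decide),
      (hσ 0 1).mpr (by decide), (hσ 1 2).mpr (by decide)⟩
  · rintro ⟨a, b, c, hab, hbc, h₁, h₂⟩
    refine ⟨![a, b, c], strictMono_vecCons_three hab hbc, fun x y => ?_⟩
    fin_cases x <;> fin_cases y <;> simp [p123] <;> order

lemma containsPattern_p213_iff (σ : Equiv.Perm (Fin n)) :
    containsPattern σ p213 ↔
      ∃ a b c : Fin n, a < b ∧ b < c ∧ σ b < σ a ∧ σ a < σ c := by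
  constructor
  · rintro ⟨f, hf, hσ⟩
    exact ⟨f 0, f 1, f 2, hf (by decide), hf (by decide),
      (hσ 1 0).mpr (by decide), (hσ 0 2).mpr (by decide)⟩
  · rintro ⟨a, b, c, hab, hbc, h₁, h₂⟩
    refine ⟨![a, b, c], strictMono_vecCons_three hab hbc, fun x y => ?_⟩
    fin_cases x <;> fin_cases y <;> simp [p213, Equiv.swap_apply_def] <;> order

lemma containsPattern_p123_or_p213_iff (σ : Equiv.Perm (Fin n)) :
    containsPattern σ p123 ∨ containsPattern σ p213 ↔
      ∃ a b c : Fin n, a < b ∧ b < c ∧ σ a < σ c ∧ σ b < σ c := by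
  rw [containsPattern_p123_iff, containsPattern_p213_iff]
  constructor
  · rintro (⟨a, b, c, hab, hbc, h₁, h₂⟩ | ⟨a, b, c, hab, hbc, h₁, h₂⟩)
    · exact ⟨a, b, c, hab, hbc, h₁.trans h₂, h₂⟩
    · exact ⟨a, b, c, hab, hbc, h₂, h₁.trans h₂⟩
  · rintro ⟨a, b, c, hab, hbc, ha, hb⟩
    rcases (σ.injective.ne hab.ne).lt_or_gt with h | h
    · exact .inl ⟨a, b, c, hab, hbc, h, hb⟩
    · exact .inr ⟨a, b, c, hab, hbc, h, ha⟩

lemma exists_two_smaller_before_of_lt_add (σ : Equiv.Perm (Fin n)) {i : Fin n}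
    (hi : n < (σ i : ℕ) + i) : ∃ a b, a < b ∧ b < i ∧ σ a < σ i ∧ σ b < σ i := by
  have hlarger : ((Iio i).filter (¬ σ · < σ i)).card ≤ n - 1 - σ i := by
    rw [← Fin.card_Ioi (σ i)]
    refine card_le_card_of_injOn σ (fun j hj => ?_) σ.injective.injOn
    simp only [coe_filter, mem_Iio, not_lt, Set.mem_ofPred_eq, coe_Ioi] at hj ⊢
    exact hj.2.lt_of_ne (σ.injective.ne hj.1.ne')
  have hsplit := card_filter_add_card_filter_not (s := Iio i) (σ · < σ i)
  rw [Fin.card_Iio] at hsplit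
  obtain ⟨x, hx, y, hy, hxy⟩ := one_lt_card.mp (by omega : 1 < ((Iio i).filter (σ · < σ i)).card)
  simp only [mem_filter, mem_Iio] at hx hy
  rcases hxy.lt_or_gt with h | h
  · exact ⟨x, y, h, hy.1, hx.2, hy.2⟩
  · exact ⟨y, x, h, hx.1, hy.2, hx.2⟩

lemma not_two_smaller_before_of_add_le (σ : Equiv.Perm (Fin n))
    (hσ : ∀ i, (σ i : ℕ) + i ≤ n) {a b c : Fin n} (hab : a < b) (hbc : b < c)
    (ha : σ a < σ c) : ¬ σ b < σ c := by
  intro hb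
  have hmaps : ∀ v ∈ Ici (σ c), (σ.symm v : ℕ) ∈ ((range (n - σ c + 1)).erase a).erase b := by
    intro v hv
    rw [mem_Ici] at hv
    have hbound := hσ (σ.symm v)
    rw [σ.apply_symm_apply] at hbound
    have hv' : (σ c : ℕ) ≤ v := hv
    refine mem_erase.mpr ⟨?_, mem_erase.mpr ⟨?_, mem_range.mpr (by omega)⟩⟩
    · exact fun h => hb.not_ge (by rwa [← Fin.val_injective h, σ.apply_symm_apply])
    · exact fun h => ha.not_ge (by rwa [← Fin.val_injective h, σ.apply_symm_apply])
  have hcard := card_le_card_of_injOn (fun v => (σ.symm v : ℕ)) hmaps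
    (Fin.val_injective.comp σ.symm.injective).injOn
  have hc := hσ c
  have hab' : (a : ℕ) < b := hab
  have hbc' : (b : ℕ) < c := hbc
  have ha_mem : (a : ℕ) ∈ range (n - σ c + 1) := mem_range.mpr (by omega)
  have hb_mem : (b : ℕ) ∈ (range (n - σ c + 1)).erase a :=
    mem_erase.mpr ⟨Fin.val_ne_of_ne hab.ne', mem_range.mpr (by omega)⟩
  rw [Fin.card_Ici, card_erase_of_mem hb_mem, card_erase_of_mem ha_mem, card_range] at hcard
  omega

lemma avoids_p123_p213_iff (σ : Equiv.Perm (Fin n)) :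
    (¬ containsPattern σ p123 ∧ ¬ containsPattern σ p213) ↔ ∀ i, (σ i : ℕ) + i ≤ n := by
  rw [← not_or, containsPattern_p123_or_p213_iff]
  constructor
  · intro h i
    by_contra hi
    obtain ⟨a, b, hab, hbi, ha, hb⟩ := exists_two_smaller_before_of_lt_add σ (not_le.mp hi)
    exact h ⟨a, b, i, hab, hbi, ha, hb⟩
  · rintro hσ ⟨a, b, c, hab, hbc, ha, hb⟩
    exact not_two_smaller_before_of_add_le σ hσ hab hbc ha hb

theorem stmt12_general (n : ℕ) :
    (∀ σ : Equiv.Perm (Fin n),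
      (¬ containsPattern σ p123 ∧ ¬ containsPattern σ p213) ↔
        ∀ i : Fin n, ((σ i : ℕ) + 1) + ((i : ℕ) + 1) ≤ n + 2) ∧
    convexHull ℝ (permMatrix ''
        {σ : Equiv.Perm (Fin n) | ¬ containsPattern σ p123 ∧ ¬ containsPattern σ p213}) =
      convexHull ℝ (permMatrix ''
        {σ : Equiv.Perm (Fin n) |
          ∀ i : Fin n, ((σ i : ℕ) + 1) + ((i : ℕ) + 1) ≤ n + 2}) := by
  have key : ∀ σ : Equiv.Perm (Fin n),
      (¬ containsPattern σ p123 ∧ ¬ containsPattern σ p213) ↔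
        ∀ i : Fin n, ((σ i : ℕ) + 1) + ((i : ℕ) + 1) ≤ n + 2 := fun σ => by
    simp only [avoids_p123_p213_iff, add_add_add_comm, Nat.add_le_add_iff_right]
  exact ⟨key, by rw [Set.ext key]⟩

theorem stmt12 (n : ℕ) (hn : 1 ≤ n) :
    (∀ σ : Equiv.Perm (Fin n),
      (¬ containsPattern σ p123 ∧ ¬ containsPattern σ p213) ↔
        ∀ i : Fin n, ((σ i : ℕ) + 1) + ((i : ℕ) + 1) ≤ n + 2) ∧
    convexHull ℝ (permMatrix ''
        {σ : Equiv.Perm (Fin n) | ¬ containsPattern σ p123 ∧ ¬ containsPattern σ p213}) =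
      convexHull ℝ (permMatrix ''
        {σ : Equiv.Perm (Fin n) |
          ∀ i : Fin n, ((σ i : ℕ) + 1) + ((i : ℕ) + 1) ≤ n + 2}) :=
  stmt12_general n
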